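/- Let u₁(ξ,τ) = (5/2)√((2+ξ)² − τ²) − (4 + 2ξ) on the domain {(ξ,τ) : ξ > −2, |τ| < 2+ξ} (the explicit solution of the Cauchy problem of Example 4.1 in spacetime coordinates). Then for every fixed ξ > 0, the partial derivative ∂u₁/∂τ(ξ,τ) tends to −∞ as τ increases to ξ + 2. Hence this wave map, although it arises from real-analytic initial data at τ = 0, blows up in finite time: it admits no C¹ extension past the curve τ = ξ + 2. -/

import Mathlib

/-!
Along a fixed `ξ > -2`, `∂u₁/∂τ = -(5/2) τ / √((2+ξ)² - τ²)`; the square root tends to `0⁺` at the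
light-cone edge `τ = ξ + 2`, so the derivative tends to `-∞`. A `C¹` extension across that point
would have a continuous derivative there, agreeing with `∂u₁/∂τ` just to its left, hence bounded.
-/

open Filter

noncomputable def u1 (ξ τ : ℝ) : ℝ :=
  (5 / 2) * Real.sqrt ((2 + ξ) ^ 2 - τ ^ 2) - (4 + 2 * ξ)

open Set Topology

theorem hasDerivAt_sqrt_sq_sub {a τ : ℝ} (hτ : τ ^ 2 < a ^ 2) :
    HasDerivAt (fun t => √(a ^ 2 - t ^ 2)) (-τ / √(a ^ 2 - τ ^ 2)) τ := by
  convert (((hasDerivAt_pow 2 τ).const_sub (a ^ 2)).sqrt (sub_pos.2 hτ).ne') using 1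
  field_simp
  ring

theorem tendsto_sqrt_sq_sub_nhdsLT {a : ℝ} (ha : 0 < a) :
    Tendsto (fun τ => √(a ^ 2 - τ ^ 2)) (𝓝[<] a) (𝓝[>] 0) := by
  refine tendsto_nhdsWithin_iff.2 ⟨?_, ?_⟩
  · have hcont : Continuous fun τ : ℝ => √(a ^ 2 - τ ^ 2) := by fun_prop
    simpa using (hcont.tendsto a).mono_left nhdsWithin_le_nhds
  · filter_upwards [Ioo_mem_nhdsLT (show -a < a by linarith)] with τ hτ
    exact Real.sqrt_pos.2 (by nlinarith [hτ.1, hτ.2])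

theorem hasDerivAt_u1 {ξ τ : ℝ} (hτ : |τ| < 2 + ξ) :
    HasDerivAt (u1 ξ) (-(5 / 2 * τ) / √((2 + ξ) ^ 2 - τ ^ 2)) τ := by
  have hτ' : τ ^ 2 < (2 + ξ) ^ 2 := sq_lt_sq' (abs_lt.1 hτ).1 (abs_lt.1 hτ).2
  exact (((hasDerivAt_sqrt_sq_sub hτ').const_mul (5 / 2)).sub_const (4 + 2 * ξ)).congr_deriv
    (by ring)

theorem tendsto_deriv_u1_atBot {ξ : ℝ} (hξ : -2 < ξ) :
    Tendsto (deriv (u1 ξ)) (𝓝[<] (ξ + 2)) atBot := by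
  have ha : 0 < 2 + ξ := by linarith
  have hinv : Tendsto (fun τ => (√((2 + ξ) ^ 2 - τ ^ 2))⁻¹) (𝓝[<] (ξ + 2)) atTop := by
    rw [add_comm ξ]
    exact tendsto_inv_nhdsGT_zero.comp (tendsto_sqrt_sq_sub_nhdsLT ha)
  have hcoef : Tendsto (fun τ : ℝ => -(5 / 2 * τ)) (𝓝[<] (ξ + 2)) (𝓝 (-(5 / 2 * (ξ + 2)))) :=
    ((continuous_id.const_mul _).neg.tendsto _).mono_left nhdsWithin_le_nhds
  refine (hcoef.neg_mul_atTop (by linarith) hinv).congr' ?_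
  filter_upwards [Ioo_mem_nhdsLT (show -(ξ + 2) < ξ + 2 by linarith)] with τ hτ
  rw [(hasDerivAt_u1 (abs_lt.2 ⟨by linarith [hτ.1], by linarith [hτ.2]⟩)).deriv, div_eq_mul_inv]
  rfl

theorem not_tendsto_deriv_atBot_of_contDiffOn_eqOn {f g : ℝ → ℝ} {a ε : ℝ} (hε : 0 < ε)
    (hg : ContDiffOn ℝ 1 g (Ioo (a - ε) (a + ε))) (hfg : EqOn g f (Ioo (a - ε) a)) :
    ¬ Tendsto (deriv f) (𝓝[<] a) atBot := by
  have hcont : ContinuousAt (deriv g) a :=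
    (hg.continuousOn_deriv_of_isOpen isOpen_Ioo le_rfl).continuousAt
      (Ioo_mem_nhds (by linarith) (by linarith))
  have hderiv : deriv g =ᶠ[𝓝[<] a] deriv f := by
    filter_upwards [Ioo_mem_nhdsLT (show a - ε < a by linarith)] with τ hτ
    exact (hfg.eventuallyEq_of_mem (isOpen_Ioo.mem_nhds hτ)).deriv_eq
  exact not_tendsto_atBot_of_tendsto_nhds
    ((hcont.tendsto.mono_left nhdsWithin_le_nhds).congr' hderiv)

/-- for every fixed `ξ > 0`, the derivative `∂u₁/∂τ` tends to `−∞` as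
`τ` increases to `ξ + 2`; hence the wave map of Example 4.1, though arising from
real-analytic initial data, blows up in finite time and admits no C¹ extension in `τ`
past `τ = ξ + 2`. -/
theorem example41_blowup (ξ : ℝ) (hξ : 0 < ξ) :
    Tendsto (fun τ => deriv (fun t => u1 ξ t) τ) (nhdsWithin (ξ + 2) (Set.Iio (ξ + 2)))
      atBot ∧
    ¬ ∃ (g : ℝ → ℝ) (ε : ℝ), 0 < ε ∧
        ContDiffOn ℝ 1 g (Set.Ioo (ξ + 2 - ε) (ξ + 2 + ε)) ∧
        ∀ τ ∈ Set.Ioo (ξ + 2 - ε) (ξ + 2), g τ = u1 ξ τ := by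
  have hblowup := tendsto_deriv_u1_atBot (show -2 < ξ by linarith)
  refine ⟨hblowup, ?_⟩
  rintro ⟨g, ε, hε, hg, hgu⟩
  exact not_tendsto_deriv_atBot_of_contDiffOn_eqOn hε hg hgu hblowup
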